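/- Let k ≥ 3, let G be a connected finite simple graph with at least one edge, and let H = G^{(k)} be the k-th power hypergraph of G. Let ρ be the unique eigenvalue of the adjacency tensor 𝒜(H) admitting a strictly positive eigenvector. Then the number of eigenvectors of 𝒜(H) associated with ρ, counted up to multiplication by nonzero complex scalars, is exactly k^{|V(G)|+|E(G)|(k−3)−1}; that is, |𝕍_ρ(𝒜(G^{(k)}))| = k^{|V(G)|+|E(G)|(k−3)−1}. -/

import Mathlib

open Finset

/-- `(𝒜(H) x^{k-1})_v = ∑_{e ∈ E(H), v ∈ e} ∏_{u ∈ e∖{v}} x_u` for a hypergraph with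
edge set `E` on a vertex type `V`. -/
noncomputable def adjApply {V : Type*} [DecidableEq V] (E : Finset (Finset V))
    (x : V → ℂ) (v : V) : ℂ :=
  ∑ e ∈ E.filter (fun e => v ∈ e), ∏ u ∈ e.erase v, x u

/-- The vertex type of the `k`-th power hypergraph `G^{(k)}`: the vertices of `G`
together with `k-2` new vertices for each edge of `G`. -/
abbrev PowerVert (k N : ℕ) (G : SimpleGraph (Fin N)) [DecidableRel G.Adj] : Type :=
  Fin N ⊕ ({ε : Sym2 (Fin N) // ε ∈ G.edgeFinset} × Fin (k - 2))

/-- The edge of `G^{(k)}` corresponding to an edge `ε = {u,v}` of `G`: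
`{u, v, w_{ε,1}, …, w_{ε,k-2}}`. -/
def powerEdge (k N : ℕ) (G : SimpleGraph (Fin N)) [DecidableRel G.Adj]
    (ε : {ε : Sym2 (Fin N) // ε ∈ G.edgeFinset}) : Finset (PowerVert k N G) :=
  ((univ.filter (fun u : Fin N => u ∈ ε.1)).image Sum.inl) ∪
    ((univ : Finset (Fin (k - 2))).image (fun t => Sum.inr (ε, t)))

/-- The edge set of the `k`-th power hypergraph `G^{(k)}`. -/
def powerEdges (k N : ℕ) (G : SimpleGraph (Fin N)) [DecidableRel G.Adj] :
    Finset (Finset (PowerVert k N G)) :=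
  univ.image (powerEdge k N G)

/-!
Let `y > 0` be the Perron vector. For an eigenvector `x` of `ρ`, `|x|` is a subeigenvector,
`ρ |x|^{k-1} ≤ 𝒜 |x|^{k-1}`; equality at a vertex where `|x| / y` is maximal propagates along
edges, so by connectivity `|x| = t y`. Then the triangle inequality in `(𝒜 x^{k-1})_v` is an
equality, so the phases `σ = x / |x|` satisfy `∏_{u ∈ e ∖ v} σ_u = σ_v^{k-1}` on every edge:
`σ_v^k = ∏_{u ∈ e} σ_u` is constant along edges, hence everywhere. Up to scalars the
eigenvectors of `ρ` are thus the `s y` with `s` a vector of `k`-th roots of unity, `s_{v₀} = 1`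
and `∏_{u ∈ e} s_u = 1` on each edge, i.e. the kernel of a homomorphism
`μ_k^V → μ_k × μ_k^E`. For a power hypergraph every edge has a vertex of its own, so this
homomorphism is onto and its kernel has `k^{|V| - 1 - |E|} = k^{N + |E|(k-3) - 1}` elements.
-/

noncomputable def adjApplyReal {V : Type*} [DecidableEq V] (E : Finset (Finset V))
    (z : V → ℝ) (v : V) : ℝ :=
  ∑ e ∈ E.filter (fun e => v ∈ e), ∏ u ∈ e.erase v, z u

lemma Finset.eq_of_prod_eq_prod_of_le {ι R : Type*} [CommMonoidWithZero R] [PartialOrder R]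
    [ZeroLEOneClass R] [PosMulStrictMono R] [Nontrivial R] {s : Finset ι} {f g : ι → R}
    (hf : ∀ i ∈ s, 0 ≤ f i) (hg : ∀ i ∈ s, 0 < g i) (hfg : ∀ i ∈ s, f i ≤ g i)
    (h : ∏ i ∈ s, f i = ∏ i ∈ s, g i) : ∀ i ∈ s, f i = g i := by
  by_contra! ⟨i, hi, hne⟩
  by_cases hf0 : ∀ j ∈ s, 0 < f j
  · exact (prod_lt_prod hf0 hfg ⟨i, hi, (hfg i hi).lt_of_ne hne⟩).ne h
  · obtain ⟨j, hj, hj0⟩ := not_forall₂.mp hf0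
    rw [prod_eq_zero hj ((hf j hj).lt_or_eq.resolve_left hj0).symm] at h
    exact (prod_pos hg).ne h

open scoped ComplexOrder ComplexConjugate in
lemma Complex.mul_norm_sum_eq_of_sum_norm_le {ι : Type*} {s : Finset ι} {a : ι → ℂ}
    (h : ∑ i ∈ s, ‖a i‖ ≤ ‖∑ i ∈ s, a i‖) {i : ι} (hi : i ∈ s) :
    a i * ‖∑ j ∈ s, a j‖ = ‖a i‖ * ∑ j ∈ s, a j := by
  set w := ∑ j ∈ s, a j
  have hle : ∀ j ∈ s, (a j * conj w).re ≤ ‖a j‖ * ‖w‖ := fun j _ => by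
    simpa using re_le_norm (a j * conj w)
  have hsum : ∑ j ∈ s, (a j * conj w).re = ∑ j ∈ s, ‖a j‖ * ‖w‖ := by
    refine le_antisymm (sum_le_sum hle) ?_
    rw [← re_sum, ← sum_mul, ← sum_mul, mul_conj, normSq_eq_norm_sq, ofReal_re, sq]
    exact mul_le_mul_of_nonneg_right h (norm_nonneg w)
  have hreal : a i * conj w = (‖a i‖ * ‖w‖ : ℝ) := by
    have hre := (sum_eq_sum_iff_of_le hle).1 hsum i hi
    have hnorm : ‖a i * conj w‖ = ‖a i‖ * ‖w‖ := by simp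
    have h0 : ((0 : ℝ) : ℂ) ≤ a i * conj w := by
      simpa using re_eq_norm.1 (hre.trans hnorm.symm)
    rw [eq_re_of_ofReal_le h0, hre]
  rcases eq_or_ne w 0 with hw | hw
  · simp [hw]
  · have hw' : (‖w‖ : ℂ) ≠ 0 := by simpa using hw
    apply mul_right_cancel₀ hw'
    calc a i * ‖w‖ * ‖w‖ = a i * conj w * w := by
          rw [mul_assoc, mul_assoc, conj_mul', sq]
      _ = ‖a i‖ * w * ‖w‖ := by rw [hreal]; push_cast; ring

section Hypergraph

variable {V : Type*} {E : Finset (Finset V)} {k : ℕ}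

def IsHyperConnected (E : Finset (Finset V)) : Prop :=
  ∀ u v, Relation.ReflTransGen (fun a b => ∃ e ∈ E, a ∈ e ∧ b ∈ e) u v

lemma IsHyperConnected.forall_of_edge_closed (hE : IsHyperConnected E) {P : V → Prop}
    (hP : ∀ e ∈ E, ∀ a ∈ e, ∀ b ∈ e, P a → P b) {v₀ : V} (h₀ : P v₀) (v : V) : P v := by
  induction hE v₀ v with
  | refl => exact h₀
  | tail _ hab ih =>
    obtain ⟨e, he, ha, hb⟩ := hab
    exact hP e he _ ha _ hb ih

variable [DecidableEq V]

lemma adjApply_ofReal (z : V → ℝ) (v : V) :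
    adjApply E (fun u => (z u : ℂ)) v = adjApplyReal E z v := by
  simp [adjApply, adjApplyReal]

lemma norm_adjApply_le (x : V → ℂ) (v : V) :
    ‖adjApply E x v‖ ≤ adjApplyReal E (fun u => ‖x u‖) v :=
  (norm_sum_le _ _).trans_eq (by simp only [adjApplyReal, norm_prod])

lemma adjApplyReal_mono {z z' : V → ℝ} (hz : ∀ u, 0 ≤ z u) (hzz' : ∀ u, z u ≤ z' u)
    (v : V) : adjApplyReal E z v ≤ adjApplyReal E z' v :=
  sum_le_sum fun _ _ => prod_le_prod (fun u _ => hz u) (fun u _ => hzz' u)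

lemma adjApplyReal_const_mul (huni : ∀ e ∈ E, e.card = k) (t : ℝ) (z : V → ℝ) (v : V) :
    adjApplyReal E (fun u => t * z u) v = t ^ (k - 1) * adjApplyReal E z v := by
  rw [adjApplyReal, adjApplyReal, mul_sum]
  refine sum_congr rfl fun e he => ?_
  obtain ⟨heE, hve⟩ := mem_filter.1 he
  rw [prod_mul_distrib, prod_const, card_erase_of_mem hve, huni e heE]

lemma pos_of_mem_edge {ρ : ℝ} {y : V → ℝ} (hy : ∀ v, 0 < y v)
    (hρ : ∀ v, adjApplyReal E y v = ρ * y v ^ (k - 1)) {e : Finset V} (he : e ∈ E)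
    {v : V} (hv : v ∈ e) : 0 < ρ := by
  have hpos : 0 < adjApplyReal E y v :=
    sum_pos' (fun e _ => prod_nonneg fun u _ => (hy u).le)
      ⟨e, mem_filter.2 ⟨he, hv⟩, prod_pos fun u _ => hy u⟩
  rw [hρ] at hpos
  exact (pos_iff_pos_of_mul_pos hpos).2 (pow_pos (hy v) _)

lemma exists_eq_const_mul_of_le_adjApplyReal [Finite V] [Nonempty V]
    (hconn : IsHyperConnected E) (huni : ∀ e ∈ E, e.card = k) {ρ : ℝ} {y z : V → ℝ}
    (hy : ∀ v, 0 < y v) (hρ : ∀ v, adjApplyReal E y v = ρ * y v ^ (k - 1))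
    (hz : ∀ v, 0 ≤ z v) (hsub : ∀ v, ρ * z v ^ (k - 1) ≤ adjApplyReal E z v) :
    ∃ t, ∀ v, z v = t * y v := by
  obtain ⟨vM, hvM⟩ := Finite.exists_max fun v => z v / y v
  set t := z vM / y vM
  have hzle : ∀ v, z v ≤ t * y v := fun v => (div_le_iff₀ (hy v)).1 (hvM v)
  refine ⟨t, ?_⟩
  rcases (div_nonneg (hz vM) (hy vM).le).eq_or_lt with ht0 | htpos
  · have ht : t = 0 := ht0.symm
    intro v
    rw [ht, zero_mul]
    exact le_antisymm (by simpa [ht] using hzle v) (hz v)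
  have hty : ∀ v, adjApplyReal E (fun u => t * y u) v = ρ * (t * y v) ^ (k - 1) := fun v => by
    rw [adjApplyReal_const_mul huni, hρ, mul_pow]
    ring
  refine hconn.forall_of_edge_closed (P := fun v => z v = t * y v) ?_
    (div_mul_cancel₀ _ (hy vM).ne').symm
  intro e he a ha b hb hza
  -- `z / y` attains its maximum `t` at `a`, so `adjApplyReal_mono` is an equality term by term
  have hAeq : adjApplyReal E z a = adjApplyReal E (fun u => t * y u) a :=
    le_antisymm (adjApplyReal_mono hz hzle a) (by rw [hty, ← hza]; exact hsub a)
  have hprod := (sum_eq_sum_iff_of_le fun _ _ =>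
    prod_le_prod (fun u _ => hz u) (fun u _ => hzle u)).1 hAeq e (mem_filter.2 ⟨he, ha⟩)
  rcases eq_or_ne b a with rfl | hba
  · exact hza
  · exact eq_of_prod_eq_prod_of_le (fun u _ => hz u) (fun u _ => mul_pos htpos (hy u))
      (fun u _ => hzle u) hprod b (mem_erase.2 ⟨hba, hb⟩)

lemma prod_erase_div_norm_eq {ρ : ℝ} (hρ : 0 < ρ) {x : V → ℂ} (hx0 : ∀ v, x v ≠ 0)
    (hx : ∀ v, adjApply E x v = ρ * x v ^ (k - 1))
    (hnorm : ∀ v, adjApplyReal E (fun u => ‖x u‖) v = ρ * ‖x v‖ ^ (k - 1))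
    {e : Finset V} (he : e ∈ E) {v : V} (hv : v ∈ e) :
    ∏ u ∈ e.erase v, x u / ‖x u‖ = (x v / ‖x v‖) ^ (k - 1) := by
  have hsum : ∑ e' ∈ E.filter (v ∈ ·), ‖∏ u ∈ e'.erase v, x u‖ ≤ ‖adjApply E x v‖ := by
    simp only [norm_prod]
    rw [← adjApplyReal, hnorm, hx, norm_mul, norm_pow, Complex.norm_real,
      Real.norm_of_nonneg hρ.le]
  have key := Complex.mul_norm_sum_eq_of_sum_norm_le hsum (mem_filter.2 ⟨he, hv⟩)
  change _ * (‖adjApply E x v‖ : ℂ) = _ * adjApply E x v at key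
  rw [hx, norm_mul, norm_pow, Complex.norm_real, Real.norm_of_nonneg hρ.le, norm_prod] at key
  have hxn : ∀ u, (‖x u‖ : ℂ) ≠ 0 := fun u => by simpa using hx0 u
  rw [prod_div_distrib, div_pow, div_eq_div_iff (prod_ne_zero_iff.2 fun u _ => hxn u)
    (pow_ne_zero _ (hxn v))]
  have hρ0 : (ρ : ℂ) ≠ 0 := by exact_mod_cast hρ.ne'
  apply mul_left_cancel₀ hρ0
  push_cast at key ⊢
  linear_combination key

end Hypergraph

section Phases

variable {V : Type*} {E : Finset (Finset V)} {k : ℕ}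

def phaseMap (E : Finset (Finset V)) (k : ℕ) (v₀ : V) :
    (V → rootsOfUnity k ℂ) →* rootsOfUnity k ℂ × (E → rootsOfUnity k ℂ) :=
  (Pi.evalMonoidHom _ v₀).prod (MonoidHom.pi fun e => ∏ u ∈ e.1, Pi.evalMonoidHom _ u)

lemma mem_ker_phaseMap {v₀ : V} {s : V → rootsOfUnity k ℂ} :
    s ∈ (phaseMap E k v₀).ker ↔ s v₀ = 1 ∧ ∀ e ∈ E, ∏ u ∈ e, s u = 1 := by
  simp [phaseMap, Prod.ext_iff, funext_iff, MonoidHom.pi_apply, MonoidHom.finsetProd_apply]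

variable [DecidableEq V]

lemma exists_mem_ker_phaseMap_of_prod_erase [NeZero k] (hconn : IsHyperConnected E)
    (huni : ∀ e ∈ E, e.card = k) {σ : V → ℂ} (hσ0 : ∀ v, σ v ≠ 0)
    (hσ : ∀ e ∈ E, ∀ v ∈ e, ∏ u ∈ e.erase v, σ u = σ v ^ (k - 1)) (v₀ : V) :
    ∃ s ∈ (phaseMap E k v₀).ker, ∀ v, σ v = σ v₀ * (s v : ℂˣ) := by
  have hpow : ∀ e ∈ E, ∀ v ∈ e, σ v ^ k = ∏ u ∈ e, σ u := fun e he v hv => by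
    rw [← mul_prod_erase _ _ hv, hσ e he v hv, ← pow_succ', Nat.sub_add_cancel NeZero.one_le]
  have hconst : ∀ v, σ v ^ k = σ v₀ ^ k :=
    hconn.forall_of_edge_closed (P := fun v => σ v ^ k = σ v₀ ^ k)
      (fun e he a ha b hb h => by rw [hpow e he b hb, ← hpow e he a ha, h]) rfl
  have hroot : ∀ v, (σ v / σ v₀) ^ k = 1 := fun v => by
    rw [div_pow, hconst, div_self (pow_ne_zero _ (hσ0 v₀))]
  refine ⟨fun v => rootsOfUnity.mkOfPowEq _ (hroot v),
    mem_ker_phaseMap.2 ⟨?_, fun e he => ?_⟩, fun v => ?_⟩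
  · ext
    simp [div_self (hσ0 v₀)]
  · obtain ⟨v, hv⟩ := card_pos.1 ((huni e he).symm ▸ NeZero.pos k)
    ext
    simp only [Subgroup.val_finsetProd, Units.coe_prod, rootsOfUnity.val_mkOfPowEq_coe,
      prod_div_distrib, prod_const, OneMemClass.coe_one, Units.val_one]
    rw [← hpow e he v hv, huni e he, hconst, div_self (pow_ne_zero _ (hσ0 v₀))]
  · simp [mul_div_cancel₀ _ (hσ0 v₀)]

lemma prod_erase_eq_pow_of_mem_ker [NeZero k] {v₀ : V} {s : V → rootsOfUnity k ℂ}
    (hs : s ∈ (phaseMap E k v₀).ker) {e : Finset V} (he : e ∈ E) {v : V} (hv : v ∈ e) :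
    ∏ u ∈ e.erase v, s u = s v ^ (k - 1) := by
  refine mul_left_cancel (a := s v) ?_
  rw [mul_prod_erase _ _ hv, (mem_ker_phaseMap.1 hs).2 e he, ← pow_succ',
    Nat.sub_add_cancel NeZero.one_le]
  exact Subtype.ext ((mem_rootsOfUnity k _).1 (s v).2).symm

lemma adjApply_mul_of_mem_ker [NeZero k] {ρ : ℝ} {y : V → ℝ}
    (hρ : ∀ v, adjApplyReal E y v = ρ * y v ^ (k - 1)) {v₀ : V} {s : V → rootsOfUnity k ℂ}
    (hs : s ∈ (phaseMap E k v₀).ker) (v : V) :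
    adjApply E (fun u => (s u : ℂˣ) * (y u : ℂ)) v = ρ * ((s v : ℂˣ) * (y v : ℂ)) ^ (k - 1) := by
  have hterm : ∀ e ∈ E.filter (v ∈ ·), ∏ u ∈ e.erase v, ((s u : ℂˣ) * (y u : ℂ)) =
      ((s v : ℂˣ) : ℂ) ^ (k - 1) * ∏ u ∈ e.erase v, (y u : ℂ) := fun e he => by
    obtain ⟨heE, hv⟩ := mem_filter.1 he
    rw [prod_mul_distrib]
    congr 1
    simpa using congrArg (fun r : rootsOfUnity k ℂ => ((r : ℂˣ) : ℂ))
      (prod_erase_eq_pow_of_mem_ker hs heE hv)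
  rw [adjApply, sum_congr rfl hterm, ← mul_sum]
  change _ * adjApply E (fun u => (y u : ℂ)) v = _
  rw [adjApply_ofReal, hρ]
  push_cast
  ring

end Phases

section Eigenvariety

variable {V : Type*} [DecidableEq V] {E : Finset (Finset V)} {k : ℕ}

def Eigenvectors (E : Finset (Finset V)) (k : ℕ) (ρ : ℂ) : Type _ :=
  {x : V → ℂ // x ≠ 0 ∧ ∀ v, adjApply E x v = ρ * x v ^ (k - 1)}

def ProjEigenvariety (E : Finset (Finset V)) (k : ℕ) (ρ : ℂ) : Type _ :=
  Quot fun x z : Eigenvectors E k ρ => ∃ c : ℂ, c ≠ 0 ∧ z.1 = c • x.1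

lemma exists_eq_smul_of_eigenvector [Finite V] [NeZero k] (hconn : IsHyperConnected E)
    (huni : ∀ e ∈ E, e.card = k) {ρ : ℝ} (hρ0 : 0 < ρ) {y : V → ℝ} (hy : ∀ v, 0 < y v)
    (hρ : ∀ v, adjApplyReal E y v = ρ * y v ^ (k - 1)) (v₀ : V) (x : Eigenvectors E k ρ) :
    ∃ c : ℂ, c ≠ 0 ∧ ∃ s ∈ (phaseMap E k v₀).ker,
      x.1 = c • fun v => (s v : ℂˣ) * (y v : ℂ) := by
  obtain ⟨x, hx0, hx⟩ := x
  have : Nonempty V := ⟨v₀⟩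
  obtain ⟨t, ht⟩ := exists_eq_const_mul_of_le_adjApplyReal (z := fun v => ‖x v‖) hconn huni
    hy hρ (fun v => norm_nonneg _) fun v => by
      simpa [hx, Real.norm_of_nonneg hρ0.le] using norm_adjApply_le (E := E) x v
  obtain ⟨w, hw⟩ := Function.ne_iff.1 hx0
  have htpos : 0 < t := pos_of_mul_pos_left ((norm_pos_iff.2 hw).trans_eq (ht w)) (hy w).le
  have hxv : ∀ v, x v ≠ 0 := fun v => norm_pos_iff.1 ((ht v).symm ▸ mul_pos htpos (hy v))
  have hnorm : ∀ v, adjApplyReal E (fun u => ‖x u‖) v = ρ * ‖x v‖ ^ (k - 1) := fun v => by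
    simp only [ht, adjApplyReal_const_mul huni, hρ, mul_pow]
    ring
  set σ : V → ℂ := fun v => x v / ‖x v‖
  obtain ⟨s, hs, hσs⟩ := exists_mem_ker_phaseMap_of_prod_erase (σ := σ) hconn huni
    (fun v => div_ne_zero (hxv v) (by simpa using hxv v))
    (fun e he v hv => prod_erase_div_norm_eq hρ0 hxv hx hnorm he hv) v₀
  refine ⟨t * σ v₀, mul_ne_zero (by exact_mod_cast htpos.ne') (by simpa [σ] using hxv v₀),
    s, hs, ?_⟩
  funext v
  have hxσ : x v = σ v * ‖x v‖ := (div_mul_cancel₀ _ (by simpa using hxv v)).symm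
  change x v = _
  rw [Pi.smul_apply, smul_eq_mul, hxσ, hσs, ht]
  push_cast
  ring

omit [DecidableEq V] in
lemma equivalence_exists_smul_eq {p : (V → ℂ) → Prop} :
    Equivalence fun x z : {x : V → ℂ // p x} => ∃ c : ℂ, c ≠ 0 ∧ z.1 = c • x.1 where
  refl _ := ⟨1, one_ne_zero, (one_smul _ _).symm⟩
  symm := fun ⟨c, hc, h⟩ => ⟨c⁻¹, inv_ne_zero hc, by rw [h, inv_smul_smul₀ hc]⟩
  trans := fun ⟨c, hc, h⟩ ⟨d, hd, h'⟩ => ⟨d * c, mul_ne_zero hd hc, by rw [h', h, smul_smul]⟩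

theorem card_projEigenvariety_eq_card_ker [Finite V] [NeZero k] (hconn : IsHyperConnected E)
    (huni : ∀ e ∈ E, e.card = k) (hE : E.Nonempty) {ρ : ℝ} {y : V → ℝ} (hy : ∀ v, 0 < y v)
    (hρ : ∀ v, adjApplyReal E y v = ρ * y v ^ (k - 1)) (v₀ : V) :
    Nat.card (ProjEigenvariety E k ρ) = Nat.card (phaseMap E k v₀).ker := by
  obtain ⟨e, he⟩ := hE
  obtain ⟨v, hv⟩ := card_pos.1 ((huni e he).symm ▸ NeZero.pos k)
  have hρ0 := pos_of_mem_edge hy hρ he hv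
  let Φ : (phaseMap E k v₀).ker → ProjEigenvariety E k ρ := fun s =>
    Quot.mk _ ⟨fun v => (s.1 v : ℂˣ) * (y v : ℂ),
      fun h => by simpa [(hy v₀).ne'] using congrFun h v₀, adjApply_mul_of_mem_ker hρ s.2⟩
  refine (Nat.card_eq_of_bijective Φ ⟨fun s₁ s₂ h => ?_, Quot.ind fun x => ?_⟩).symm
  · obtain ⟨c, -, hc⟩ := equivalence_exists_smul_eq.eqvGen_iff.1 (Quot.eqvGen_exact h)
    have hy0 : ∀ v, (y v : ℂ) ≠ 0 := fun v => by exact_mod_cast (hy v).ne'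
    have hc1 : c = 1 := by
      have hv₀ := congrFun hc v₀
      simp only [Pi.smul_apply, smul_eq_mul, (mem_ker_phaseMap.1 s₁.2).1,
        (mem_ker_phaseMap.1 s₂.2).1, OneMemClass.coe_one, Units.val_one, one_mul] at hv₀
      exact mul_right_cancel₀ (hy0 v₀) (hv₀.symm.trans (one_mul _).symm)
    refine Subtype.ext <| funext fun v => Subtype.ext <| Units.ext <|
      mul_right_cancel₀ (hy0 v) ?_
    simpa [hc1] using (congrFun hc v).symm
  · obtain ⟨c, hc, s, hs, hx⟩ := exists_eq_smul_of_eigenvector hconn huni hρ0 hy hρ v₀ x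
    exact ⟨⟨s, hs⟩, Quot.sound ⟨c, hc, hx⟩⟩

end Eigenvariety

section PowerHypergraph

variable {k N : ℕ} {G : SimpleGraph (Fin N)} [DecidableRel G.Adj]

@[simp]
lemma inl_mem_powerEdge {ε : G.edgeFinset} {u : Fin N} :
    Sum.inl u ∈ powerEdge k N G ε ↔ u ∈ ε.1 := by
  simp [powerEdge]

@[simp]
lemma inr_mem_powerEdge {ε ε' : G.edgeFinset} {t : Fin (k - 2)} :
    Sum.inr (ε', t) ∈ powerEdge k N G ε ↔ ε' = ε := by
  simp [powerEdge, eq_comm]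

lemma mem_powerEdges {e : Finset (PowerVert k N G)} :
    e ∈ powerEdges k N G ↔ ∃ ε, powerEdge k N G ε = e := by
  simp [powerEdges]

lemma filter_mem_edge_eq_toFinset (ε : G.edgeFinset) :
    univ.filter (fun u : Fin N => u ∈ ε.1) = ε.1.toFinset := by
  ext u
  simp [Sym2.mem_toFinset]

lemma prod_powerEdge {M : Type*} [CommMonoid M] (ε : G.edgeFinset)
    (f : PowerVert k N G → M) :
    ∏ w ∈ powerEdge k N G ε, f w =
      (∏ u ∈ ε.1.toFinset, f (Sum.inl u)) * ∏ t, f (Sum.inr (ε, t)) := by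
  rw [powerEdge, prod_union (disjoint_left.2 (by simp)), prod_image (by simp),
    prod_image (by simp [Set.InjOn]), filter_mem_edge_eq_toFinset]

lemma card_powerEdge (hk : 2 ≤ k) (ε : G.edgeFinset) : #(powerEdge k N G ε) = k := by
  rw [powerEdge, card_union_of_disjoint (disjoint_left.2 (by simp)),
    card_image_of_injective _ Sum.inl_injective,
    card_image_of_injective _ (by simp [Function.Injective]), filter_mem_edge_eq_toFinset,
    G.card_toFinset_mem_edgeFinset, card_univ, Fintype.card_fin]
  omega

lemma powerEdge_injective (hk : 3 ≤ k) : Function.Injective (powerEdge k N G) := by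
  intro ε ε' h
  have : Sum.inr (ε, (⟨0, by omega⟩ : Fin (k - 2))) ∈ powerEdge k N G ε' := by
    rw [← h]
    simp
  simpa using this

lemma card_powerEdges (hk : 3 ≤ k) : #(powerEdges k N G) = #G.edgeFinset := by
  rw [powerEdges, card_image_of_injective _ (powerEdge_injective hk), card_univ,
    Fintype.card_coe]

lemma card_of_mem_powerEdges (hk : 2 ≤ k) {e : Finset (PowerVert k N G)}
    (he : e ∈ powerEdges k N G) : #e = k := by
  obtain ⟨ε, rfl⟩ := mem_powerEdges.1 he
  exact card_powerEdge hk ε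

lemma isHyperConnected_powerEdges (hconn : G.Connected) :
    IsHyperConnected (powerEdges k N G) := by
  set R := fun a b : PowerVert k N G => ∃ e ∈ powerEdges k N G, a ∈ e ∧ b ∈ e
  have hedge : ∀ ε, ∀ a ∈ powerEdge k N G ε, ∀ b ∈ powerEdge k N G ε, R a b :=
    fun ε a ha b hb => ⟨_, mem_powerEdges.2 ⟨ε, rfl⟩, ha, hb⟩
  have hinl : ∀ a b : Fin N, Relation.ReflTransGen R (.inl a) (.inl b) := fun a b =>
    ((SimpleGraph.reachable_iff_reflTransGen a b).1 (hconn a b)).lift _ fun a b hab =>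
      hedge ⟨s(a, b), G.mem_edgeFinset.2 hab⟩ _ (by simp) _ (by simp)
  have hreach_inl : ∀ w, ∃ a,
      Relation.ReflTransGen R w (.inl a) ∧ Relation.ReflTransGen R (.inl a) w := by
    rintro (a | ⟨ε, t⟩)
    · exact ⟨a, .refl, .refl⟩
    · have ha : Sum.inl ε.1.out.1 ∈ powerEdge k N G ε := by simpa using Sym2.out_fst_mem ε.1
      have ht : Sum.inr (ε, t) ∈ powerEdge k N G ε := by simp
      exact ⟨_, .single (hedge ε _ ht _ ha), .single (hedge ε _ ha _ ht)⟩
  intro u v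
  obtain ⟨a, hua, -⟩ := hreach_inl u
  obtain ⟨b, -, hbv⟩ := hreach_inl v
  exact hua.trans ((hinl a b).trans hbv)

lemma phaseMap_powerEdges_surjective (hk : 3 ≤ k) (u₀ : Fin N) :
    Function.Surjective (phaseMap (powerEdges k N G) k (Sum.inl u₀)) := by
  rintro ⟨c, g⟩
  let t₀ : Fin (k - 2) := ⟨0, by omega⟩
  let a : Fin N → rootsOfUnity k ℂ := Pi.mulSingle u₀ c
  -- the vertex `(ε, t₀)` lies in no other edge, so it can absorb the prescribed value of `g`
  let b : G.edgeFinset → rootsOfUnity k ℂ := fun ε =>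
    (∏ u ∈ ε.1.toFinset, a u)⁻¹ * g ⟨powerEdge k N G ε, mem_powerEdges.2 ⟨ε, rfl⟩⟩
  refine ⟨Sum.elim a fun p => if p.2 = t₀ then b p.1 else 1, Prod.ext ?_ (funext ?_)⟩
  · simp [phaseMap, a]
  · rintro ⟨e, he⟩
    obtain ⟨ε, rfl⟩ := mem_powerEdges.1 he
    simp [phaseMap, MonoidHom.finsetProd_apply, prod_powerEdge, b]

lemma card_ker_phaseMap_powerEdges (hk : 3 ≤ k) (u₀ : Fin N) :
    Nat.card (phaseMap (powerEdges k N G) k (Sum.inl u₀)).ker =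
      k ^ (N + #G.edgeFinset * (k - 3) - 1) := by
  have : NeZero k := ⟨by omega⟩
  have hcard := (phaseMap (powerEdges k N G) k (Sum.inl u₀)).ker.card_mul_index
  rw [Subgroup.index_ker, MonoidHom.range_eq_top.2 (phaseMap_powerEdges_surjective hk u₀),
    Subgroup.card_top] at hcard
  simp only [Nat.card_prod, Nat.card_fun, Complex.card_rootsOfUnity, Nat.card_eq_fintype_card,
    Fintype.card_sum, Fintype.card_prod, Fintype.card_fin, Fintype.card_coe,
    card_powerEdges hk] at hcard
  have hexp : N + #G.edgeFinset * (k - 2) =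
      N + #G.edgeFinset * (k - 3) - 1 + (#G.edgeFinset + 1) := by
    rw [show k - 2 = k - 3 + 1 by omega, Nat.mul_succ]
    have := u₀.pos
    omega
  rw [hexp, pow_add, pow_succ', mul_comm k] at hcard
  exact Nat.eq_of_mul_eq_mul_right (by positivity) hcard

end PowerHypergraph

/-- for a connected simple graph `G` with at least one edge and `k ≥ 3`,
the number of eigenvectors of `𝒜(G^{(k)})` associated with the Perron–Frobenius
eigenvalue `ρ`, up to nonzero complex scalars, is `k^{|V(G)| + |E(G)|(k-3) - 1}`. -/
theorem stmt8 (k N : ℕ) (hk : 3 ≤ k) (G : SimpleGraph (Fin N)) [DecidableRel G.Adj]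
    (hconn : G.Connected) (hne : G.edgeFinset.Nonempty)
    (ρ : ℝ) (y : PowerVert k N G → ℝ) (hy : ∀ i, 0 < y i)
    (hρ : ∀ v, adjApply (powerEdges k N G) (fun i => (y i : ℂ)) v =
      (ρ : ℂ) * (y v : ℂ) ^ (k - 1)) :
    Nat.card (Quot (fun
        (x z : {x : PowerVert k N G → ℂ //
          x ≠ 0 ∧ ∀ v, adjApply (powerEdges k N G) x v = (ρ : ℂ) * x v ^ (k - 1)}) =>
      ∃ c : ℂ, c ≠ 0 ∧ z.1 = c • x.1)) = k ^ (N + G.edgeFinset.card * (k - 3) - 1) := by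
  have : NeZero k := ⟨by omega⟩
  obtain ⟨u₀⟩ := hconn.nonempty
  obtain ⟨ε, hε⟩ := hne
  have hρ' : ∀ v, adjApplyReal (powerEdges k N G) y v = ρ * y v ^ (k - 1) := fun v => by
    exact_mod_cast (adjApply_ofReal y v).symm.trans (hρ v)
  rw [← card_ker_phaseMap_powerEdges hk u₀]
  exact card_projEigenvariety_eq_card_ker (isHyperConnected_powerEdges hconn)
    (fun _ => card_of_mem_powerEdges (by omega)) ⟨_, mem_powerEdges.2 ⟨⟨ε, hε⟩, rfl⟩⟩ hy hρ'
    (Sum.inl u₀)
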